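/- Let n, k ≥ 1 with gcd(3k, n) = 1, let F be the finite field with 2ⁿ elements, and define φ_k : F² → F² by φ_k(x, y) = (x^(2^k) + y, y^(2^k) + x + y). Then φ_k is a bijection. -/

import Mathlib

/-!
In characteristic 2 the map `φ_k` is additive, so it suffices that its kernel is trivial.
If `φ_k(x, y) = 0` then `y = x^(2^k)` and `y^(2^k) = x + y`, hence
`x^(2^(3k)) = (x + y)^(2^k) = y + x + y = x`. Since also `x^(2^n) = x` and `gcd(3k, n) = 1`,
`x` is fixed by the Frobenius itself, i.e. `x ∈ {0, 1}`; and `x = 1` forces `y = 1`, which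
contradicts `y^(2^k) = x + y`.
-/

open Function

section

variable {F : Type*}

theorem charP_two_of_card_eq_two_pow [Field F] [Fintype F] {n : ℕ}
    (hF : Fintype.card F = 2 ^ n) : CharP F 2 := by
  obtain ⟨p, hchar, m, hp, hcard⟩ := FiniteField.card' F
  have hp_dvd : p ∣ 2 ^ n := hF ▸ hcard ▸ dvd_pow_self p m.ne_zero
  obtain rfl : p = 2 :=
    (Nat.prime_dvd_prime_iff_eq hp Nat.prime_two).mp (hp.dvd_of_dvd_pow hp_dvd)
  exact hchar

theorem isPeriodicPt_pow_iff [Monoid F] {p m : ℕ} {x : F} :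
    IsPeriodicPt (· ^ p) m x ↔ x ^ p ^ m = x := by
  rw [IsPeriodicPt, IsFixedPt, pow_iterate]

theorem pow_eq_self_of_pow_pow_eq_self [Field F] [Fintype F] {p n m : ℕ}
    (hF : Fintype.card F = p ^ n) (hmn : m.Coprime n) {x : F} (hx : x ^ p ^ m = x) :
    x ^ p = x := by
  have hn : IsPeriodicPt (· ^ p) n x := isPeriodicPt_pow_iff.mpr (hF ▸ FiniteField.pow_card x)
  simpa [hmn.gcd_eq_one] using isPeriodicPt_pow_iff.mp ((isPeriodicPt_pow_iff.mpr hx).gcd hn)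

section CharTwo

variable (F) [CommRing F] [CharP F 2]

def phi (k : ℕ) : F × F →+ F × F where
  toFun w := (w.1 ^ 2 ^ k + w.2, w.2 ^ 2 ^ k + w.1 + w.2)
  map_zero' := by simp
  map_add' a b := by
    simp only [Prod.fst_add, Prod.snd_add, add_pow_char_pow, Prod.mk_add_mk]
    exact Prod.ext (by ring) (by ring)

variable {F}

theorem pow_two_pow_three_mul_eq_self_of_phi_eq_zero {k : ℕ} {x y : F}
    (h : phi F k (x, y) = 0) : y = x ^ 2 ^ k ∧ x ^ 2 ^ (3 * k) = x := by
  simp only [phi, AddMonoidHom.coe_mk, ZeroHom.coe_mk, Prod.mk_eq_zero] at h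
  obtain ⟨hx, hy⟩ := h
  have h2 : (2 : F) = 0 := CharTwo.two_eq_zero
  have hy_eq : y = x ^ 2 ^ k := by linear_combination hx - x ^ 2 ^ k * h2
  have hy_pow : y ^ 2 ^ k = x + y := by linear_combination hy - (x + y) * h2
  refine ⟨hy_eq, ?_⟩
  calc x ^ 2 ^ (3 * k) = ((x ^ 2 ^ k) ^ 2 ^ k) ^ 2 ^ k := by ring
    _ = (x + y) ^ 2 ^ k := by rw [← hy_eq, hy_pow]
    _ = x := by
      rw [add_pow_char_pow, ← hy_eq, hy_pow]
      linear_combination y * h2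

end CharTwo

theorem eq_zero_of_phi_eq_zero [Field F] [Fintype F] [CharP F 2] {n k : ℕ}
    (hF : Fintype.card F = 2 ^ n) (hkn : (3 * k).Coprime n) (w : F × F) (hw : phi F k w = 0) : w = 0 := by
  obtain ⟨x, y⟩ := w
  obtain ⟨hy, hx⟩ := pow_two_pow_three_mul_eq_self_of_phi_eq_zero hw
  have hx_idem : IsIdempotentElem x :=
    (sq x).symm.trans (pow_eq_self_of_pow_pow_eq_self hF hkn hx)
  rcases IsIdempotentElem.iff_eq_zero_or_one.mp hx_idem with rfl | rfl
  · simp [hy]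
  · have h3 : (1 : F) + 1 + 1 = 0 := by simpa [phi, hy] using congrArg Prod.snd hw
    have h2 : (2 : F) = 0 := CharTwo.two_eq_zero
    exact absurd (by linear_combination h3 - h2) (one_ne_zero (α := F))

end

theorem phi_k_bijective_general
    (n k : ℕ) (hgcd : Nat.gcd (3 * k) n = 1)
    (F : Type*) [Field F] [Fintype F] (hF : Fintype.card F = 2 ^ n) :
    Function.Bijective
      (fun w : F × F => (w.1 ^ 2 ^ k + w.2, w.2 ^ 2 ^ k + w.1 + w.2)) := by
  have := charP_two_of_card_eq_two_pow hF
  exact Finite.injective_iff_bijective.mp <|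
    (injective_iff_map_eq_zero (phi F k)).mpr (eq_zero_of_phi_eq_zero hF hgcd)

/-- If `gcd(3k, n) = 1` (with `n, k ≥ 1`) and `F` is the field with `2ⁿ`
elements, then `φ_k(x, y) = (x^(2^k) + y, y^(2^k) + x + y)` is a bijection of `F²`. -/
theorem phi_k_bijective
    (n k : ℕ) (hn : 1 ≤ n) (hk : 1 ≤ k) (hgcd : Nat.gcd (3 * k) n = 1)
    (F : Type*) [Field F] [Fintype F] (hF : Fintype.card F = 2 ^ n) :
    Function.Bijective
      (fun w : F × F => (w.1 ^ 2 ^ k + w.2, w.2 ^ 2 ^ k + w.1 + w.2)) :=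
  phi_k_bijective_general n k hgcd F hF
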